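/- Let v ∈ W, let β ∈ A_ℓ(v), and let α ∈ A(s_β v) with (α,β) ≥ 0. Then α ∈ A(v) and β ∈ D(s_α s_β v). -/

import Mathlib

/- Setting: a reduced, irreducible, crystallographic, simply laced root system `roots`
in a real inner product space `V`, with a fixed base `base` of simple roots,
its Weyl group (generated by the reflections in the simple roots), the length
function, the (strong) Bruhat order, the weak left Bruhat order, the sets
`A_ℓ(v)`, `A(v)`, `D(w)`, `AD(v,w)`, and the partial order on roots induced
by the base. -/

open scoped InnerProductSpace Classical

noncomputable section

variable {V : Type*} [NormedAddCommGroup V] [InnerProductSpace ℝ V]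

/-- The underlying linear map of the reflection `s_α : x ↦ x - (2⟪x,α⟫/⟪α,α⟫) α`. -/
def reflMap (α : V) : V →ₗ[ℝ] V where
  toFun x := x - (2 * ⟪x, α⟫_ℝ / ⟪α, α⟫_ℝ) • α
  map_add' x y := by
    simp only [inner_add_left]
    rw [show 2 * (⟪x, α⟫_ℝ + ⟪y, α⟫_ℝ) / ⟪α, α⟫_ℝ
        = 2 * ⟪x, α⟫_ℝ / ⟪α, α⟫_ℝ + 2 * ⟪y, α⟫_ℝ / ⟪α, α⟫_ℝ by ring]
    rw [add_smul]
    abel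
  map_smul' c x := by
    simp only [real_inner_smul_left, RingHom.id_apply, smul_sub, smul_smul]
    rw [show 2 * (c * ⟪x, α⟫_ℝ) / ⟪α, α⟫_ℝ = c * (2 * ⟪x, α⟫_ℝ / ⟪α, α⟫_ℝ) by ring]

theorem reflMap_involutive (α : V) : Function.Involutive (reflMap α) := by
  intro x
  by_cases h : (⟪α, α⟫_ℝ) = (0 : ℝ)
  · have hα : α = 0 := inner_self_eq_zero.mp h
    simp [reflMap, hα]
  · show reflMap α (x - (2 * ⟪x, α⟫_ℝ / ⟪α, α⟫_ℝ) • α) = x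
    show (x - (2 * ⟪x, α⟫_ℝ / ⟪α, α⟫_ℝ) • α)
        - (2 * ⟪x - (2 * ⟪x, α⟫_ℝ / ⟪α, α⟫_ℝ) • α, α⟫_ℝ / ⟪α, α⟫_ℝ) • α = x
    have h1 : ⟪x - (2 * ⟪x, α⟫_ℝ / ⟪α, α⟫_ℝ) • α, α⟫_ℝ = -⟪x, α⟫_ℝ := by
      rw [inner_sub_left, real_inner_smul_left]
      field_simp
      ring
    rw [h1, show 2 * -⟪x, α⟫_ℝ / ⟪α, α⟫_ℝ = -(2 * ⟪x, α⟫_ℝ / ⟪α, α⟫_ℝ) by ring,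
      neg_smul, sub_neg_eq_add, sub_add_cancel]

/-- The reflection `s_α` in the hyperplane orthogonal to `α`,
as a linear automorphism of `V`. -/
def sRefl (α : V) : V ≃ₗ[ℝ] V := LinearEquiv.ofInvolutive (reflMap α) (reflMap_involutive α)

/-- A reduced, irreducible, crystallographic, simply laced root system in the real
inner product space `V`, together with a choice of base (system of simple roots)
and the corresponding coordinate function `coeff α β = n_β(α)`. -/
structure SimplyLacedRootSystem (V : Type*) [NormedAddCommGroup V]
    [InnerProductSpace ℝ V] : Type _ where
  /-- the set `R` of roots -/
  roots : Set V
  /-- the base `Δ` of simple roots -/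
  base : Finset V
  finite : roots.Finite
  nonzero : ∀ α ∈ roots, α ≠ 0
  span_eq_top : Submodule.span ℝ roots = ⊤
  /-- the root system is reduced -/
  reduced : ∀ α ∈ roots, ∀ t : ℝ, t • α ∈ roots → t = 1 ∨ t = -1
  /-- the root system is crystallographic: all `⟨γ,α⟩ = 2(γ,α)/(α,α)` are integers -/
  crystallographic : ∀ α ∈ roots, ∀ γ ∈ roots, ∃ n : ℤ, 2 * ⟪γ, α⟫_ℝ / ⟪α, α⟫_ℝ = (n : ℝ)
  reflect_mem : ∀ α ∈ roots, ∀ γ ∈ roots, sRefl α γ ∈ roots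
  /-- the root system is simply laced: all roots have the same length -/
  simplyLaced : ∀ α ∈ roots, ∀ γ ∈ roots, ⟪α, α⟫_ℝ = ⟪γ, γ⟫_ℝ
  /-- the root system is irreducible -/
  irreducible : ∀ R₁ R₂ : Set V, R₁ ∪ R₂ = roots →
    (∀ α ∈ R₁, ∀ γ ∈ R₂, ⟪α, γ⟫_ℝ = 0) → R₁ = ∅ ∨ R₂ = ∅
  base_subset : ↑base ⊆ roots
  base_indep : LinearIndependent ℝ (Subtype.val : {x : V // x ∈ base} → V)
  /-- `coeff α β` is the coefficient `n_β(α)` of the simple root `β` in `α` -/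
  coeff : V → V → ℝ
  coeff_spec : ∀ α ∈ roots, α = ∑ β ∈ base, coeff α β • β
  coeff_int : ∀ α ∈ roots, ∀ β ∈ base, ∃ n : ℤ, coeff α β = (n : ℝ)
  coeff_sign : ∀ α ∈ roots, (∀ β ∈ base, 0 ≤ coeff α β) ∨ (∀ β ∈ base, coeff α β ≤ 0)

namespace SimplyLacedRootSystem

variable (P : SimplyLacedRootSystem V)

/-- The set `R⁺` of positive roots. -/
def pos : Set V := {α ∈ P.roots | ∀ β ∈ P.base, 0 ≤ P.coeff α β}

/-- The support `Δ(α) = {β ∈ Δ : n_β(α) > 0}` of a (positive) root `α`. -/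
def support (α : V) : Finset V := P.base.filter (fun β => 0 < P.coeff α β)

/-- `N⁺(α,β) = {β' ∈ Δ(α) : (β,β') < 0 and (α,β') > 0}`. -/
def Nplus (α β : V) : Finset V :=
  (P.support α).filter (fun β' => ⟪β, β'⟫_ℝ < 0 ∧ 0 < ⟪α, β'⟫_ℝ)

/-- `N⁻(α,β) = {β' ∈ Δ(α) : (β,β') < 0 and (α,β') ≤ 0}`. -/
def Nminus (α β : V) : Finset V :=
  (P.support α).filter (fun β' => ⟪β, β'⟫_ℝ < 0 ∧ ⟪α, β'⟫_ℝ ≤ 0)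

/-- The partial order on `V` induced by the base: `x ≤ y` iff `y - x` is a
nonnegative linear combination of the simple roots. -/
def rle (x y : V) : Prop :=
  ∃ c : V → ℝ, (∀ β, 0 ≤ c β) ∧ y - x = ∑ β ∈ P.base, c β • β

/-- The strict version of the partial order `rle` on roots. -/
def rlt (x y : V) : Prop := P.rle x y ∧ x ≠ y

/-- `α` is a minimal element of the set `S` with respect to the partial order on roots. -/
def IsMinimalIn (α : V) (S : Set V) : Prop := α ∈ S ∧ ∀ γ ∈ S, ¬ P.rlt γ α

/-- The Weyl group `W`, i.e. the subgroup of `GL(V)` generated by the reflections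
in the simple roots (equivalently, by all the reflections `s_α`, `α ∈ R`). -/
def weyl : Subgroup (V ≃ₗ[ℝ] V) := Subgroup.closure (sRefl '' ↑P.base)

/-- The length function `ℓ` of `W` with respect to the simple reflections. -/
def len (w : V ≃ₗ[ℝ] V) : ℕ :=
  sInf {n | ∃ l : List V, l.length = n ∧ (∀ β ∈ l, β ∈ P.base) ∧ (l.map sRefl).prod = w}

/-- One step in the Bruhat order: multiplication by the reflection of a positive
root which increases the length. -/
def bStep (u w : V ≃ₗ[ℝ] V) : Prop :=
  ∃ α ∈ P.pos, w = sRefl α * u ∧ P.len u < P.len w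

/-- The (strong) Bruhat order `≤` on `W`. -/
def ble : (V ≃ₗ[ℝ] V) → (V ≃ₗ[ℝ] V) → Prop := Relation.ReflTransGen P.bStep

/-- The strict (strong) Bruhat order `<` on `W`. -/
def blt (u w : V ≃ₗ[ℝ] V) : Prop := P.ble u w ∧ u ≠ w

/-- The covering relation `⋖` of the Bruhat order. -/
def bcov (u w : V ≃ₗ[ℝ] V) : Prop := P.blt u w ∧ P.len w = P.len u + 1

/-- One step in the weak left Bruhat order. -/
def wlStep (u w : V ≃ₗ[ℝ] V) : Prop :=
  ∃ β ∈ P.base, w = sRefl β * u ∧ P.len u < P.len w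

/-- The weak left Bruhat order `≤_ℓ` on `W`. -/
def wle : (V ≃ₗ[ℝ] V) → (V ≃ₗ[ℝ] V) → Prop := Relation.ReflTransGen P.wlStep

/-- `A_ℓ(v) = {β ∈ Δ : v < s_β v}`. -/
def Al (v : V ≃ₗ[ℝ] V) : Set V := {β : V | β ∈ P.base ∧ P.blt v (sRefl β * v)}

/-- `A(v) = {α ∈ R⁺ : v⁻¹(α) > 0}`. -/
def A (v : V ≃ₗ[ℝ] V) : Set V := {α ∈ P.pos | v⁻¹ α ∈ P.pos}

/-- `D(w) = {α ∈ R⁺ : w⁻¹(α) < 0}`. -/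
def Dset (w : V ≃ₗ[ℝ] V) : Set V := {α ∈ P.pos | -(w⁻¹ α) ∈ P.pos}

/-- `AD(v,w) = A(v) ∩ D(w)`. -/
def ADset (v w : V ≃ₗ[ℝ] V) : Set V := P.A v ∩ P.Dset w

end SimplyLacedRootSystem

/-! Since `v < s_β v`, the exchange property forces `v⁻¹ β > 0`. As `(α, β) ≥ 0` and `α ≠ β`
(otherwise `v⁻¹ s_β α = -v⁻¹ β < 0`), simple lacedness leaves `n = ⟨α, β⟩ ∈ {0, 1}`, so
`s_β α = α - n β` and `s_α β = β - n α`. Then `v⁻¹ α = v⁻¹ (s_β α) + n v⁻¹ β` and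
`-(s_α s_β v)⁻¹ β = (1 - n²) v⁻¹ β + n v⁻¹ α` are roots which are nonnegative combinations of
positive roots, hence positive. -/

lemma sRefl_apply (α x : V) : sRefl α x = x - (2 * ⟪x, α⟫_ℝ / ⟪α, α⟫_ℝ) • α := rfl

lemma sRefl_sRefl (α x : V) : sRefl α (sRefl α x) = x := reflMap_involutive α x

lemma sRefl_mul_self (α : V) : sRefl α * sRefl α = 1 :=
  LinearEquiv.ext (sRefl_sRefl α)

lemma sRefl_inv (α : V) : (sRefl α)⁻¹ = sRefl α :=
  inv_eq_of_mul_eq_one_left (sRefl_mul_self α)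

lemma sRefl_self {α : V} (hα : α ≠ 0) : sRefl α α = -α := by
  have h : ⟪α, α⟫_ℝ ≠ 0 := fun h => hα (inner_self_eq_zero.mp h)
  rw [sRefl_apply, mul_div_assoc, div_self h]
  module

lemma inner_sRefl_sRefl (α x y : V) : ⟪sRefl α x, sRefl α y⟫_ℝ = ⟪x, y⟫_ℝ := by
  by_cases h : ⟪α, α⟫_ℝ = 0
  · simp [sRefl_apply, inner_self_eq_zero.mp h]
  · simp only [sRefl_apply, inner_sub_left, inner_sub_right, real_inner_smul_left,
      real_inner_smul_right, real_inner_comm α y]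
    field_simp
    ring

lemma sRefl_map {w : V ≃ₗ[ℝ] V} (hw : ∀ x y, ⟪w x, w y⟫_ℝ = ⟪x, y⟫_ℝ) (γ : V) :
    sRefl (w γ) = w * sRefl γ * w⁻¹ := by
  ext x
  have hx : w (w⁻¹ x) = x := w.apply_symm_apply x
  change sRefl (w γ) x = w (sRefl γ (w⁻¹ x))
  rw [sRefl_apply, sRefl_apply, map_sub, map_smul, hx, ← hw (w⁻¹ x) γ, hx, hw]

lemma sRefl_mul_sRefl_sRefl (β γ : V) : sRefl β * sRefl (sRefl β γ) = sRefl γ * sRefl β := by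
  rw [sRefl_map (inner_sRefl_sRefl β) γ, sRefl_inv, ← mul_assoc, ← mul_assoc, sRefl_mul_self,
    one_mul]

namespace SimplyLacedRootSystem

variable (P : SimplyLacedRootSystem V)

lemma coeff_eq_of_eq_sum {α : V} (hα : α ∈ P.roots) {c : V → ℝ}
    (h : α = ∑ β ∈ P.base, c β • β) {β : V} (hβ : β ∈ P.base) : P.coeff α β = c β := by
  have h0 : ∑ b : P.base, (P.coeff α b - c b) • (b : V) = 0 := by
    rw [Finset.univ_eq_attach, Finset.sum_attach P.base fun β => (P.coeff α β - c β) • β]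
    simp only [sub_smul, Finset.sum_sub_distrib]
    rw [← P.coeff_spec α hα, ← h, sub_self]
  exact sub_eq_zero.mp (Fintype.linearIndependent_iff.mp P.base_indep _ h0 ⟨β, hβ⟩)

lemma coeff_smul_add_smul {x a b : V} (hx : x ∈ P.roots) (ha : a ∈ P.roots)
    (hb : b ∈ P.roots) {s t : ℝ} (h : x = s • a + t • b) {β : V} (hβ : β ∈ P.base) :
    P.coeff x β = s * P.coeff a β + t * P.coeff b β := by
  refine P.coeff_eq_of_eq_sum hx (c := fun β => s * P.coeff a β + t * P.coeff b β) ?_ hβ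
  simp only [add_smul, mul_smul, Finset.sum_add_distrib, ← Finset.smul_sum]
  rw [← P.coeff_spec a ha, ← P.coeff_spec b hb, h]

lemma neg_mem_roots {α : V} (hα : α ∈ P.roots) : -α ∈ P.roots := by
  simpa only [sRefl_self (P.nonzero α hα)] using P.reflect_mem α hα α hα

lemma coeff_neg {α : V} (hα : α ∈ P.roots) {β : V} (hβ : β ∈ P.base) :
    P.coeff (-α) β = -P.coeff α β := by
  simpa using P.coeff_smul_add_smul (P.neg_mem_roots hα) hα hα (s := -1) (t := 0)
    (by simp) hβ

lemma coeff_of_mem_base {β : V} (hβ : β ∈ P.base) {β' : V} (hβ' : β' ∈ P.base) :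
    P.coeff β β' = if β' = β then 1 else 0 := by
  refine P.coeff_eq_of_eq_sum (P.base_subset hβ) (c := fun β' => if β' = β then 1 else 0) ?_ hβ'
  simp only [ite_smul, one_smul, zero_smul, Finset.sum_ite_eq', if_pos hβ]

lemma mem_pos_or_neg_mem_pos {α : V} (hα : α ∈ P.roots) : α ∈ P.pos ∨ -α ∈ P.pos := by
  refine (P.coeff_sign α hα).imp (fun h => ⟨hα, h⟩) fun h => ⟨P.neg_mem_roots hα, ?_⟩
  intro β hβ
  rw [P.coeff_neg hα hβ]
  exact neg_nonneg.mpr (h β hβ)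

lemma not_mem_pos_and_neg_mem_pos {α : V} (h : α ∈ P.pos) (hneg : -α ∈ P.pos) : False := by
  apply P.nonzero α h.1
  rw [P.coeff_spec α h.1]
  refine Finset.sum_eq_zero fun β hβ => ?_
  have := hneg.2 β hβ
  rw [P.coeff_neg h.1 hβ] at this
  rw [le_antisymm (neg_nonneg.mp this) (h.2 β hβ), zero_smul]

lemma mem_pos_of_mem_base {β : V} (hβ : β ∈ P.base) : β ∈ P.pos := by
  refine ⟨P.base_subset hβ, fun β' hβ' => ?_⟩
  rw [P.coeff_of_mem_base hβ hβ']
  split_ifs <;> norm_num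

lemma mem_pos_of_eq_smul_add_smul {x a b : V} (hx : x ∈ P.roots) (ha : a ∈ P.pos)
    (hb : b ∈ P.pos) {s t : ℝ} (hs : 0 ≤ s) (ht : 0 ≤ t) (h : x = s • a + t • b) :
    x ∈ P.pos := by
  refine ⟨hx, fun β hβ => ?_⟩
  rw [P.coeff_smul_add_smul hx ha.1 hb.1 h hβ]
  exact add_nonneg (mul_nonneg hs (ha.2 β hβ)) (mul_nonneg ht (hb.2 β hβ))

lemma sRefl_mem_pos {β : V} (hβ : β ∈ P.base) {γ : V} (hγ : γ ∈ P.pos) (hne : γ ≠ β) :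
    sRefl β γ ∈ P.pos := by
  have hβR := P.base_subset hβ
  have hδ : sRefl β γ ∈ P.roots := P.reflect_mem β hβR γ hγ.1
  refine (P.mem_pos_or_neg_mem_pos hδ).resolve_right fun hneg => ?_
  -- off `β`, the coefficients of `s_β γ` are those of `γ`: both `≥ 0` and `≤ 0`
  have hzero : ∀ β' ∈ P.base, β' ≠ β → P.coeff γ β' = 0 := by
    intro β' hβ' hβ'β
    have h := hneg.2 β' hβ'
    rw [P.coeff_neg hδ hβ', P.coeff_smul_add_smul hδ hγ.1 hβR (s := 1)
      (t := -(2 * ⟪γ, β⟫_ℝ / ⟪β, β⟫_ℝ)) (by rw [sRefl_apply]; module) hβ',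
      P.coeff_of_mem_base hβ hβ', if_neg hβ'β] at h
    linarith [hγ.2 β' hβ']
  have hγβ : γ = P.coeff γ β • β := by
    conv_lhs => rw [P.coeff_spec γ hγ.1]
    exact Finset.sum_eq_single_of_mem β hβ fun b hb hbβ => by rw [hzero b hb hbβ, zero_smul]
  rcases P.reduced β hβR _ (hγβ ▸ hγ.1) with h | h
  · exact hne (by rw [hγβ, h, one_smul])
  · linarith [hγ.2 β hβ]

lemma cartan_eq_zero_or_one {α β : V} (hα : α ∈ P.roots) (hβ : β ∈ P.roots) (hne : α ≠ β)
    (hip : 0 ≤ ⟪α, β⟫_ℝ) :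
    2 * ⟪α, β⟫_ℝ / ⟪β, β⟫_ℝ = 0 ∨ 2 * ⟪α, β⟫_ℝ / ⟪β, β⟫_ℝ = 1 := by
  obtain ⟨n, hn⟩ := P.crystallographic β hβ α hα
  have hββ : 0 < ⟪β, β⟫_ℝ := real_inner_self_pos.mpr (P.nonzero β hβ)
  -- `0 < ‖α - β‖² = 2 (β, β) - 2 (α, β)` since `α` and `β` have the same length
  have hlt : ⟪α, β⟫_ℝ < ⟪β, β⟫_ℝ := by
    have h := real_inner_self_pos.mpr (sub_ne_zero.mpr hne)
    rw [inner_sub_sub_self, real_inner_comm α β, P.simplyLaced α hα β hβ] at h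
    linarith
  have h0 : (0 : ℝ) ≤ n := hn ▸ by positivity
  have h2 : (n : ℝ) < 2 := hn ▸ (div_lt_iff₀ hββ).mpr (by linarith)
  rw [hn]
  have : n = 0 ∨ n = 1 := by
    have : 0 ≤ n := by exact_mod_cast h0
    have : n < 2 := by exact_mod_cast h2
    omega
  rcases this with rfl | rfl <;> simp

lemma weyl_apply_mem_roots_iff {w : V ≃ₗ[ℝ] V} (hw : w ∈ P.weyl) (γ : V) :
    w γ ∈ P.roots ↔ γ ∈ P.roots := by
  induction hw using Subgroup.closure_induction generalizing γ with
  | mem _ hx =>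
    obtain ⟨β, hβ, rfl⟩ := hx
    refine ⟨fun h => ?_, P.reflect_mem β (P.base_subset hβ) γ⟩
    simpa only [sRefl_sRefl] using P.reflect_mem β (P.base_subset hβ) _ h
  | one => rfl
  | mul a b _ _ ha hb => exact (ha (b γ)).trans (hb γ)
  | inv a _ ha => rw [← ha, show a (a⁻¹ γ) = γ from a.apply_symm_apply γ]

lemma weyl_inv_apply_mem_roots {w : V ≃ₗ[ℝ] V} (hw : w ∈ P.weyl) {γ : V} (hγ : γ ∈ P.roots) :
    w⁻¹ γ ∈ P.roots :=
  (P.weyl_apply_mem_roots_iff (inv_mem hw) γ).mpr hγ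

lemma exists_word_of_mem_weyl {w : V ≃ₗ[ℝ] V} (hw : w ∈ P.weyl) :
    ∃ l : List V, (∀ β ∈ l, β ∈ P.base) ∧ (l.map sRefl).prod = w := by
  induction hw using Subgroup.closure_induction_left with
  | one => exact ⟨[], by simp, rfl⟩
  | mul_left x hx y _ ih =>
    obtain ⟨β, hβ, rfl⟩ := hx
    obtain ⟨l, hl, rfl⟩ := ih
    exact ⟨β :: l, List.forall_mem_cons.mpr ⟨hβ, hl⟩, rfl⟩
  | inv_mul_cancel x hx y _ ih =>
    obtain ⟨β, hβ, rfl⟩ := hx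
    obtain ⟨l, hl, rfl⟩ := ih
    exact ⟨β :: l, List.forall_mem_cons.mpr ⟨hβ, hl⟩, by simp [sRefl_inv]⟩

lemma len_le_length {w : V ≃ₗ[ℝ] V} {l : List V} (hl : ∀ β ∈ l, β ∈ P.base)
    (hw : (l.map sRefl).prod = w) : P.len w ≤ l.length :=
  Nat.sInf_le ⟨l, rfl, hl, hw⟩

lemma exists_reduced_word {w : V ≃ₗ[ℝ] V} (hw : w ∈ P.weyl) :
    ∃ l : List V, l.length = P.len w ∧ (∀ β ∈ l, β ∈ P.base) ∧ (l.map sRefl).prod = w := by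
  obtain ⟨l, hl, hlw⟩ := P.exists_word_of_mem_weyl hw
  have hne : {n | ∃ l : List V, l.length = n ∧ (∀ β ∈ l, β ∈ P.base) ∧
      (l.map sRefl).prod = w}.Nonempty := ⟨_, l, rfl, hl, hlw⟩
  exact Nat.sInf_mem hne

lemma exchange (l : List V) (hl : ∀ β ∈ l, β ∈ P.base) {γ : V} (hγ : γ ∈ P.pos)
    (hneg : -(((l.map sRefl).prod)⁻¹ γ) ∈ P.pos) :
    ∃ l' : List V, (∀ β ∈ l', β ∈ P.base) ∧
      (l'.map sRefl).prod = sRefl γ * (l.map sRefl).prod ∧ l'.length + 1 = l.length := by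
  induction l generalizing γ with
  | nil => exact (P.not_mem_pos_and_neg_mem_pos hγ (by simpa using hneg)).elim
  | cons β t ih =>
    have hβ : β ∈ P.base := hl β List.mem_cons_self
    have ht : ∀ β' ∈ t, β' ∈ P.base := fun β' h => hl β' (List.mem_cons_of_mem β h)
    rcases eq_or_ne γ β with rfl | hγβ
    · exact ⟨t, ht, by simp [← mul_assoc, sRefl_mul_self], rfl⟩
    · have hneg' : -(((t.map sRefl).prod)⁻¹ (sRefl β γ)) ∈ P.pos := by
        simpa [mul_inv_rev, sRefl_inv] using hneg
      obtain ⟨l', hl', hprod, hlen⟩ := ih ht (P.sRefl_mem_pos hβ hγ hγβ) hneg'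
      refine ⟨β :: l', List.forall_mem_cons.mpr ⟨hβ, hl'⟩, ?_, by simp [hlen]⟩
      simp only [List.map_cons, List.prod_cons, hprod, ← mul_assoc, sRefl_mul_sRefl_sRefl]

lemma len_lt_of_blt {u w : V ≃ₗ[ℝ] V} (h : P.blt u w) : P.len u < P.len w := by
  obtain ⟨hle, hne⟩ := h
  rcases Relation.reflTransGen_iff_eq_or_transGen.mp hle with rfl | htrans
  · exact (hne rfl).elim
  · have := Relation.TransGen.lift P.len (p := (· < ·)) (fun _ _ ⟨_, _, _, h⟩ => h) _ _ htrans
    rwa [Relation.transGen_eq_self] at this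

lemma inv_apply_mem_pos_of_blt {v : V ≃ₗ[ℝ] V} (hv : v ∈ P.weyl) {β : V} (hβ : β ∈ P.base)
    (hlt : P.blt v (sRefl β * v)) : v⁻¹ β ∈ P.pos := by
  refine (P.mem_pos_or_neg_mem_pos (P.weyl_inv_apply_mem_roots hv (P.base_subset hβ))).resolve_right
    fun hneg => ?_
  -- otherwise the exchange property shortens a reduced word of `v` to a word of `s_β v`
  obtain ⟨l, hlen, hl, rfl⟩ := P.exists_reduced_word hv
  obtain ⟨l', hl', hprod, hlen'⟩ := P.exchange l hl (P.mem_pos_of_mem_base hβ) hneg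
  have := P.len_le_length hl' hprod
  have := P.len_lt_of_blt hlt
  omega

end SimplyLacedRootSystem

/-- Let v ∈ W, let β ∈ A_ℓ(v), and let α ∈ A(s_β v) with (α,β) ≥ 0.
Then α ∈ A(v) and β ∈ D(s_α s_β v). -/
theorem stmt14 (P : SimplyLacedRootSystem V) (v : V ≃ₗ[ℝ] V) (hv : v ∈ P.weyl)
    (β : V) (hβ : β ∈ P.Al v)
    (α : V) (hα : α ∈ P.A (sRefl β * v)) (hip : 0 ≤ ⟪α, β⟫_ℝ) :
    α ∈ P.A v ∧ β ∈ P.Dset (sRefl α * sRefl β * v) := by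
  obtain ⟨hβΔ, hlt⟩ := hβ
  have hβR := P.base_subset hβΔ
  have hαR := hα.1.1
  have hvβ : v⁻¹ β ∈ P.pos := P.inv_apply_mem_pos_of_blt hv hβΔ hlt
  have hvsα : v⁻¹ (sRefl β α) ∈ P.pos := by simpa [mul_inv_rev, sRefl_inv] using hα.2
  have hne : α ≠ β := by
    rintro rfl
    exact P.not_mem_pos_and_neg_mem_pos hvβ (by simpa [sRefl_self (P.nonzero α hαR)] using hvsα)
  set n := 2 * ⟪α, β⟫_ℝ / ⟪β, β⟫_ℝ
  have hn : n = 0 ∨ n = 1 := P.cartan_eq_zero_or_one hαR hβR hne hip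
  have hn0 : 0 ≤ n := by rcases hn with h | h <;> simp [h]
  have hn1 : 0 ≤ 1 - n ^ 2 := by rcases hn with h | h <;> simp [h]
  have hsβα : sRefl β α = α - n • β := rfl
  have hsαβ : sRefl α β = β - n • α := by
    rw [sRefl_apply, real_inner_comm, P.simplyLaced α hαR β hβR]
  have hvα : v⁻¹ α ∈ P.pos :=
    P.mem_pos_of_eq_smul_add_smul (P.weyl_inv_apply_mem_roots hv hαR) hvsα hvβ zero_le_one hn0
      (by rw [hsβα, map_sub, map_smul]; module)
  refine ⟨⟨hα.1, hvα⟩, P.mem_pos_of_mem_base hβΔ, ?_⟩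
  have happ : (sRefl α * sRefl β * v)⁻¹ β = v⁻¹ (sRefl β (sRefl α β)) := by
    simp only [mul_inv_rev, sRefl_inv, LinearEquiv.mul_apply]
  have hroot : (sRefl α * sRefl β * v)⁻¹ β ∈ P.roots := happ ▸
    P.weyl_inv_apply_mem_roots hv (P.reflect_mem β hβR _ (P.reflect_mem α hαR β hβR))
  refine P.mem_pos_of_eq_smul_add_smul (P.neg_mem_roots hroot) hvβ hvα hn1 hn0 ?_
  rw [happ, hsαβ, map_sub, map_smul, hsβα, sRefl_self (P.nonzero β hβR)]
  simp only [map_sub, map_smul, map_neg]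
  module
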